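/- Let A = [B C] ∈ ℝ^{m×n} with k + 1 ≤ min(m,n), where B ∈ ℝ^{m×k} is the matrix of the first k columns of A and has rank k, let Q1 ∈ ℝ^{m×k} have orthonormal columns spanning the column space of B, let A_k = Q1·Q1ᵀ·A, and let B⁺ = (BᵀB)⁻¹Bᵀ. Suppose that for some μ, ν ≥ 1: (1) σ_k(A) ≤ μ·σ_k(B); (2) ‖A − A_k‖₂ ≤ μ·σ_{k+1}(A); and (3) ‖B⁺C‖_max ≤ ν. Then B is a near-local maximum volume m×k submatrix of A with parameter γ ≤ √(ν² + μ⁴): for every B̂ obtained from B by replacing one column of B with a column of C, vol(B̂) ≤ √(ν² + μ⁴)·vol(B). -/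

import Mathlib

/-!
Write `B̂ = B.updateCol i c` and split `c = B w + e` with `w = B⁺ c` and `Bᵀ e = 0`. Then
`B̂ = B P + e eᵢᵀ`, where `P` is the identity with column `i` replaced by `w`, so
`B̂ᵀ B̂ = Pᵀ (BᵀB) P + ‖e‖² eᵢ eᵢᵀ` and, since `P` does not touch the `(i, i)` cofactor,
`det (B̂ᵀ B̂) = wᵢ² det (BᵀB) + ‖e‖² cofᵢᵢ (BᵀB)`.
Now `|wᵢ| ≤ ν`; `e` is a column of `A - Q₁ Q₁ᵀ A`, so `‖e‖ ≤ μ σ_{k+1}(A) ≤ μ σ_k(A) ≤ μ² σ_k(B)`;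
and `cofᵢᵢ (BᵀB) = det (BᵀB) ((BᵀB)⁻¹)ᵢᵢ ≤ det (BᵀB) / σ_k(B)²`. Hence
`det (B̂ᵀ B̂) ≤ (ν² + μ⁴) det (BᵀB)`. Finally the volume of a tall matrix is the square root of its
Gram determinant, because the singular values, defined as distances to matrices of lower rank, are
the square roots of the eigenvalues of the Gram matrix (Eckart–Young: truncating the eigen-expansion
gives one inequality, a dimension count the other).
-/

open Matrix

/-- The spectral norm (`‖·‖₂`, largest singular value) of a real matrix. -/
noncomputable def specNorm {m n : Type*} [Fintype m] [Fintype n] [DecidableEq n]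
    (A : Matrix m n ℝ) : ℝ :=
  ‖LinearMap.toContinuousLinearMap (Matrix.toEuclideanLin A)‖

/-- `sval A j` is the `j`-th largest singular value of `A` (1-indexed), characterized as the
distance, in the spectral norm, from `A` to the set of matrices of rank `< j`. -/
noncomputable def sval {m n : Type*} [Fintype m] [Fintype n] [DecidableEq n]
    (A : Matrix m n ℝ) (j : ℕ) : ℝ :=
  sInf {x : ℝ | ∃ B : Matrix m n ℝ, B.rank < j ∧ x = specNorm (A - B)}

/-- The volume of a matrix: the product of its singular values. -/
noncomputable def vol {m n : Type*} [Fintype m] [Fintype n] [DecidableEq n]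
    (A : Matrix m n ℝ) : ℝ :=
  ∏ j ∈ Finset.Icc 1 (min (Fintype.card m) (Fintype.card n)), sval A j

/-- `DiffOne b r` : `r` is an injective selection of indices whose image (index set)
differs from the index set selected by `b` in at most one element. -/
def DiffOne {ι α : Type*} [Fintype ι] [DecidableEq α] (b r : ι → α) : Prop :=
  Function.Injective r ∧ (Finset.univ.image r \ Finset.univ.image b).card ≤ 1

section SpecNorm

variable {m n : Type*} [Fintype m] [Fintype n] [DecidableEq n]

lemma specNorm_nonneg (A : Matrix m n ℝ) : 0 ≤ specNorm A := norm_nonneg _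

lemma norm_toLp_eq_sqrt_dotProduct (v : m → ℝ) : ‖WithLp.toLp 2 v‖ = √(v ⬝ᵥ v) := by
  simp [EuclideanSpace.norm_eq, dotProduct, sq]

lemma dotProduct_self_nonneg (v : m → ℝ) : 0 ≤ v ⬝ᵥ v := by
  simpa using dotProduct_self_star_nonneg v

lemma dotProduct_mulVec_self_le (A : Matrix m n ℝ) (x : n → ℝ) :
    (A *ᵥ x) ⬝ᵥ (A *ᵥ x) ≤ specNorm A ^ 2 * (x ⬝ᵥ x) := by
  have h := (LinearMap.toContinuousLinearMap (toEuclideanLin A)).le_opNorm (WithLp.toLp 2 x)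
  rw [← specNorm, ← Real.sqrt_sq (specNorm_nonneg A)] at h
  simp only [LinearMap.coe_toContinuousLinearMap', toLpLin_apply, norm_toLp_eq_sqrt_dotProduct,
    ← Real.sqrt_mul (sq_nonneg _)] at h
  exact (Real.sqrt_le_sqrt_iff (mul_nonneg (sq_nonneg _) (dotProduct_self_nonneg x))).mp h

lemma specNorm_le_of_dotProduct_mulVec_self_le {A : Matrix m n ℝ} {c : ℝ} (hc : 0 ≤ c)
    (h : ∀ x, (A *ᵥ x) ⬝ᵥ (A *ᵥ x) ≤ c ^ 2 * (x ⬝ᵥ x)) : specNorm A ≤ c := by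
  refine ContinuousLinearMap.opNorm_le_bound _ hc fun x => ?_
  simp only [LinearMap.coe_toContinuousLinearMap', toLpLin_apply]
  rw [← WithLp.toLp_ofLp (p := 2) x, norm_toLp_eq_sqrt_dotProduct, norm_toLp_eq_sqrt_dotProduct,
    WithLp.ofLp_toLp, ← Real.sqrt_sq hc, ← Real.sqrt_mul (sq_nonneg c)]
  exact Real.sqrt_le_sqrt (h _)

end SpecNorm

section SingularValue

variable {m n : Type*} [Fintype m] [Fintype n] [DecidableEq n]

lemma sval_nonneg (A : Matrix m n ℝ) (j : ℕ) : 0 ≤ sval A j :=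
  Real.sInf_nonneg fun _ ⟨_, _, hx⟩ => hx ▸ specNorm_nonneg _

lemma sval_le_specNorm_sub (A : Matrix m n ℝ) {B : Matrix m n ℝ} {j : ℕ} (hB : B.rank < j) :
    sval A j ≤ specNorm (A - B) :=
  csInf_le ⟨0, fun _ ⟨_, _, hx⟩ => hx ▸ specNorm_nonneg _⟩ ⟨B, hB, rfl⟩

lemma le_sval (A : Matrix m n ℝ) {j : ℕ} (hj : 0 < j) {c : ℝ}
    (h : ∀ B : Matrix m n ℝ, B.rank < j → c ≤ specNorm (A - B)) : c ≤ sval A j :=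
  le_csInf ⟨_, 0, by simpa using hj, rfl⟩ fun _ ⟨B, hB, hx⟩ => hx ▸ h B hB

lemma sval_succ_le (A : Matrix m n ℝ) {j : ℕ} (hj : 0 < j) : sval A (j + 1) ≤ sval A j :=
  le_sval A hj fun _ hB => sval_le_specNorm_sub A (hB.trans j.lt_succ_self)

end SingularValue

section LinearAlgebra

variable {m n : Type*} [Fintype n] {K : Type*} [Field K]

lemma rank_add_finrank_ker_mulVecLin (A : Matrix m n K) :
    A.rank + Module.finrank K (LinearMap.ker A.mulVecLin) = Fintype.card n := by
  rw [Matrix.rank, LinearMap.finrank_range_add_finrank_ker, Module.finrank_fintype_fun_eq_card]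

lemma exists_mulVec_eq_zero_of_rank_lt {A : Matrix m n K} (h : A.rank < Fintype.card n) :
    ∃ v ≠ 0, A *ᵥ v = 0 := by
  have hker : LinearMap.ker A.mulVecLin ≠ ⊥ := by
    rw [← Submodule.one_le_finrank_iff]
    have := rank_add_finrank_ker_mulVecLin A
    omega
  obtain ⟨v, hv, hv0⟩ := Submodule.exists_mem_ne_zero_of_ne_bot hker
  exact ⟨v, hv0, hv⟩

lemma mulVec_injective_of_rank_eq {A : Matrix m n K} (h : A.rank = Fintype.card n) :
    Function.Injective A.mulVec := by
  rw [← Matrix.coe_mulVecLin, ← LinearMap.ker_eq_bot, ← Submodule.finrank_eq_zero]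
  have := rank_add_finrank_ker_mulVecLin A
  omega

lemma submatrix_val_mulVec [DecidableEq n] (A : Matrix m n K) (S : Finset n) (z : S → K) :
    A.submatrix id Subtype.val *ᵥ z =
      A *ᵥ fun i => if h : i ∈ S then z ⟨i, h⟩ else 0 := by
  ext a
  rw [mulVec, mulVec, dotProduct, dotProduct, ← Finset.sum_subset (Finset.subset_univ S)
    (fun i _ hi => by simp [hi]), ← Finset.sum_coe_sort S]
  simp

lemma exists_mulVec_eq_zero_of_rank_lt_card [DecidableEq n] {A : Matrix m n K} {S : Finset n}
    (h : A.rank < S.card) : ∃ v ≠ 0, (∀ i ∉ S, v i = 0) ∧ A *ᵥ v = 0 := by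
  obtain ⟨z, hz0, hz⟩ := exists_mulVec_eq_zero_of_rank_lt
    (A := A.submatrix id (Subtype.val : S → n))
    (by simpa using (rank_submatrix_le A id (Subtype.val : S → n)).trans_lt h)
  obtain ⟨s, hs⟩ := Function.ne_iff.mp hz0
  refine ⟨fun i => if h : i ∈ S then z ⟨i, h⟩ else 0, fun h0 => hs ?_,
    fun i hi => dif_neg hi, ?_⟩
  · simpa using congrFun h0 s
  · rwa [← submatrix_val_mulVec]

lemma dotProduct_mulVec_self_eq_transpose_mul [Fintype m] (A : Matrix m n K) (x : n → K) :
    (A *ᵥ x) ⬝ᵥ (A *ᵥ x) = x ⬝ᵥ ((Aᵀ * A) *ᵥ x) := by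
  rw [← mulVec_mulVec, dotProduct_mulVec x, vecMul_transpose]

end LinearAlgebra

section Gram

variable {m n : Type*} [Fintype m] [Fintype n] [DecidableEq n] (M : Matrix m n ℝ)

noncomputable def gramEigenvectors : Matrix n n ℝ :=
  (isHermitian_conjTranspose_mul_self M).eigenvectorUnitary

noncomputable def gramEigenvalues : n → ℝ := (isHermitian_conjTranspose_mul_self M).eigenvalues

lemma gramEigenvalues_nonneg (i : n) : 0 ≤ gramEigenvalues M i :=
  eigenvalues_conjTranspose_mul_self_nonneg M i

lemma gramEigenvectors_mul_transpose : gramEigenvectors M * (gramEigenvectors M)ᵀ = 1 := by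
  rw [← conjTranspose_eq_transpose_of_trivial, ← star_eq_conjTranspose]
  exact Unitary.coe_mul_star_self _

lemma transpose_mul_gramEigenvectors : (gramEigenvectors M)ᵀ * gramEigenvectors M = 1 := by
  rw [← conjTranspose_eq_transpose_of_trivial, ← star_eq_conjTranspose]
  exact Unitary.coe_star_mul_self _

lemma transpose_mul_self_eq_gram_diagonalization :
    Mᵀ * M = gramEigenvectors M * diagonal (gramEigenvalues M) * (gramEigenvectors M)ᵀ := by
  have h := (isHermitian_conjTranspose_mul_self M).spectral_theorem
  rw [Unitary.conjStarAlgAut_apply] at h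
  simpa [← conjTranspose_eq_transpose_of_trivial, star_eq_conjTranspose, gramEigenvectors,
    gramEigenvalues] using h

lemma dotProduct_self_eq_sum_sq_gramEigenvectors (x : n → ℝ) :
    x ⬝ᵥ x = ∑ i, ((gramEigenvectors M)ᵀ *ᵥ x) i ^ 2 := by
  simp only [sq, ← dotProduct.eq_1]
  rw [dotProduct_mulVec, vecMul_transpose, mulVec_mulVec, gramEigenvectors_mul_transpose,
    one_mulVec]

lemma dotProduct_mulVec_self_eq_sum (x : n → ℝ) :
    (M *ᵥ x) ⬝ᵥ (M *ᵥ x) =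
      ∑ i, gramEigenvalues M i * ((gramEigenvectors M)ᵀ *ᵥ x) i ^ 2 := by
  set y := (gramEigenvectors M)ᵀ *ᵥ x
  calc (M *ᵥ x) ⬝ᵥ (M *ᵥ x) = x ⬝ᵥ ((Mᵀ * M) *ᵥ x) :=
        dotProduct_mulVec_self_eq_transpose_mul M x
    _ = y ⬝ᵥ (diagonal (gramEigenvalues M) *ᵥ y) := by
        rw [transpose_mul_self_eq_gram_diagonalization, ← mulVec_mulVec, ← mulVec_mulVec,
          dotProduct_mulVec, ← mulVec_transpose]
    _ = _ := by simp [dotProduct, mulVec_diagonal, sq, mul_left_comm]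

lemma sval_card_succ_le (S : Finset n) {c : ℝ} (hc : 0 ≤ c)
    (hS : ∀ i ∉ S, gramEigenvalues M i ≤ c ^ 2) : sval M (S.card + 1) ≤ c := by
  set V := gramEigenvectors M
  set d : n → ℝ := fun i => if i ∈ S then 0 else 1
  have hrank : (M * (V * diagonal (1 - d) * Vᵀ)).rank < S.card + 1 := by
    refine Nat.lt_succ_of_le <| (rank_mul_le_right _ _).trans <|
      (rank_mul_le_left _ _).trans <| (rank_mul_le_right _ _).trans ?_
    rw [rank_diagonal, Fintype.card_subtype]
    exact Finset.card_le_card fun i => by by_cases hi : i ∈ S <;> simp [d, hi]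
  have hsub : M - M * (V * diagonal (1 - d) * Vᵀ) = M * (V * diagonal d * Vᵀ) := by
    have h1 : diagonal (1 - d) = 1 - diagonal d := by rw [← diagonal_one, diagonal_sub]; rfl
    rw [h1, mul_sub, sub_mul, mul_one, gramEigenvectors_mul_transpose, Matrix.mul_sub,
      Matrix.mul_one, sub_sub_cancel]
  refine (sval_le_specNorm_sub M hrank).trans <|
    specNorm_le_of_dotProduct_mulVec_self_le hc fun x => ?_
  have hproj : Vᵀ *ᵥ ((V * diagonal d * Vᵀ) *ᵥ x) = diagonal d *ᵥ (Vᵀ *ᵥ x) := by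
    rw [mulVec_mulVec, ← mul_assoc, ← mul_assoc, transpose_mul_gramEigenvectors, one_mul,
      ← mulVec_mulVec]
  rw [hsub, ← mulVec_mulVec, dotProduct_mulVec_self_eq_sum, hproj,
    dotProduct_self_eq_sum_sq_gramEigenvectors M x, Finset.mul_sum]
  refine Finset.sum_le_sum fun i _ => ?_
  by_cases hi : i ∈ S
  · simpa [mulVec_diagonal, d, hi] using mul_nonneg (sq_nonneg c) (sq_nonneg ((Vᵀ *ᵥ x) i))
  · simpa [mulVec_diagonal, d, hi] using
      mul_le_mul_of_nonneg_right (hS i hi) (sq_nonneg ((Vᵀ *ᵥ x) i))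

lemma le_sval_card {S : Finset n} (hS : S.Nonempty) {c : ℝ} (hc : 0 ≤ c)
    (hS' : ∀ i ∈ S, c ^ 2 ≤ gramEigenvalues M i) : c ≤ sval M S.card := by
  refine le_sval M hS.card_pos fun N hN => ?_
  set V := gramEigenvectors M
  obtain ⟨y, hy0, hyS, hy⟩ := exists_mulVec_eq_zero_of_rank_lt_card (A := N * V)
    ((rank_mul_le_left N V).trans_lt hN)
  have hVVy : Vᵀ *ᵥ (V *ᵥ y) = y := by
    rw [mulVec_mulVec, transpose_mul_gramEigenvectors, one_mulVec]
  have hy_pos : 0 < ∑ i, y i ^ 2 := by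
    obtain ⟨i, hi⟩ := Function.ne_iff.mp hy0
    exact Finset.sum_pos' (fun i _ => sq_nonneg _) ⟨i, Finset.mem_univ _, sq_pos_iff.mpr hi⟩
  have hlower :
      c ^ 2 * ∑ i, y i ^ 2 ≤ ((M - N) *ᵥ (V *ᵥ y)) ⬝ᵥ ((M - N) *ᵥ (V *ᵥ y)) := by
    rw [sub_mulVec, mulVec_mulVec y N V, hy, sub_zero, dotProduct_mulVec_self_eq_sum, hVVy,
      Finset.mul_sum]
    refine Finset.sum_le_sum fun i _ => ?_
    by_cases hi : i ∈ S
    · exact mul_le_mul_of_nonneg_right (hS' i hi) (sq_nonneg _)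
    · simp [hyS i hi]
  have hupper := dotProduct_mulVec_self_le (M - N) (V *ᵥ y)
  rw [dotProduct_self_eq_sum_sq_gramEigenvectors M, hVVy] at hupper
  have := le_of_mul_le_mul_right (hlower.trans hupper) hy_pos
  exact (pow_le_pow_iff_left₀ hc (specNorm_nonneg _) two_ne_zero).mp this

-- Mathlib's `eigenvalues` are the antitone `eigenvalues₀` reindexed along this equivalence.
lemma gramEigenvalues_apply_equivOfCardEq (a : Fin (Fintype.card n)) :
    gramEigenvalues M (Fintype.equivOfCardEq (Fintype.card_fin _) a) =
      (isHermitian_conjTranspose_mul_self M).eigenvalues₀ a := by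
  simp [gramEigenvalues, IsHermitian.eigenvalues]

lemma eigenvalues₀_conjTranspose_mul_self_nonneg (j : Fin (Fintype.card n)) :
    0 ≤ (isHermitian_conjTranspose_mul_self M).eigenvalues₀ j := by
  rw [← gramEigenvalues_apply_equivOfCardEq]
  exact gramEigenvalues_nonneg M _

lemma sval_succ_eq_sqrt_eigenvalues₀ (j : Fin (Fintype.card n)) :
    sval M (j + 1) = √((isHermitian_conjTranspose_mul_self M).eigenvalues₀ j) := by
  set e : Fin (Fintype.card n) ≃ n := Fintype.equivOfCardEq (Fintype.card_fin _)
  have hanti := (isHermitian_conjTranspose_mul_self M).eigenvalues₀_antitone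
  have hsq := Real.sq_sqrt (eigenvalues₀_conjTranspose_mul_self_nonneg M j)
  apply le_antisymm
  · have := sval_card_succ_le M ((Finset.Iio j).map e.toEmbedding) (Real.sqrt_nonneg _)
      fun i hi => by
        rw [hsq, ← e.apply_symm_apply i, gramEigenvalues_apply_equivOfCardEq]
        exact hanti (by simpa [Finset.mem_map_equiv] using hi)
    simpa using this
  · have := le_sval_card M (S := (Finset.Iic j).map e.toEmbedding) (by simp)
      (Real.sqrt_nonneg _)
      fun i hi => by
        rw [hsq, ← e.apply_symm_apply i, gramEigenvalues_apply_equivOfCardEq]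
        exact hanti (by simpa [Finset.mem_map_equiv] using hi)
    simpa using this

theorem vol_eq_sqrt_det (h : Fintype.card n ≤ Fintype.card m) : vol M = √(Mᵀ * M).det := by
  rw [vol, min_eq_right h, ← Finset.Ico_add_one_right_eq_Icc, Finset.prod_Ico_eq_prod_range,
    Nat.add_sub_cancel]
  simp_rw [add_comm 1]
  rw [← Fin.prod_univ_eq_prod_range (fun j => sval M (j + 1))]
  simp_rw [sval_succ_eq_sqrt_eigenvalues₀]
  rw [← Real.sqrt_prod _ fun j _ => eigenvalues₀_conjTranspose_mul_self_nonneg M j,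
    ← conjTranspose_eq_transpose_of_trivial,
    (isHermitian_conjTranspose_mul_self M).det_eq_prod_eigenvalues]
  congr 1
  exact Fintype.prod_equiv (Fintype.equivOfCardEq (Fintype.card_fin _)) _ _
    fun j => (gramEigenvalues_apply_equivOfCardEq M j).symm

lemma sval_card_sq_mul_dotProduct_le (x : n → ℝ) :
    sval M (Fintype.card n) ^ 2 * (x ⬝ᵥ x) ≤ (M *ᵥ x) ⬝ᵥ (M *ᵥ x) := by
  rcases isEmpty_or_nonempty n with hn | hn
  · rw [show x ⬝ᵥ x = 0 by simp [dotProduct], mul_zero]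
    exact dotProduct_self_nonneg _
  obtain ⟨i₀, -, hmin⟩ :=
    Finset.exists_min_image Finset.univ (gramEigenvalues M) Finset.univ_nonempty
  have hsval : sval M (Fintype.card n) ≤ √(gramEigenvalues M i₀) := by
    have := sval_card_succ_le M (Finset.univ.erase i₀) (Real.sqrt_nonneg _) fun i hi => by
      rw [Real.sq_sqrt (gramEigenvalues_nonneg M i₀), show i = i₀ by simpa using hi]
    rwa [Finset.card_erase_of_mem (Finset.mem_univ _), Finset.card_univ,
      Nat.sub_add_cancel Fintype.card_pos] at this
  have hsq : sval M (Fintype.card n) ^ 2 ≤ gramEigenvalues M i₀ := by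
    simpa [Real.sq_sqrt (gramEigenvalues_nonneg M i₀)] using
      pow_le_pow_left₀ (sval_nonneg M _) hsval 2
  calc sval M (Fintype.card n) ^ 2 * (x ⬝ᵥ x)
      ≤ ∑ i, gramEigenvalues M i₀ * ((gramEigenvectors M)ᵀ *ᵥ x) i ^ 2 := by
        rw [dotProduct_self_eq_sum_sq_gramEigenvectors M x, ← Finset.mul_sum]
        gcongr
    _ ≤ ∑ i, gramEigenvalues M i * ((gramEigenvectors M)ᵀ *ᵥ x) i ^ 2 :=
        Finset.sum_le_sum fun i _ =>
          mul_le_mul_of_nonneg_right (hmin i (Finset.mem_univ _)) (sq_nonneg _)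
    _ = (M *ᵥ x) ⬝ᵥ (M *ᵥ x) := (dotProduct_mulVec_self_eq_sum M x).symm

end Gram

section Cofactor

variable {n : Type*} [Fintype n] [DecidableEq n] {R : Type*} [CommRing R]

lemma adjugate_apply_self_eq_det_updateCol_updateRow (X : Matrix n n R) (i : n) :
    adjugate X i i = det ((X.updateRow i (Pi.single i 1)).updateCol i (Pi.single i 1)) := by
  set X' := X.updateRow i (Pi.single i 1)
  set v : n → R := fun a => if a = i then 0 else X a i
  have hcol : X' = X'.updateCol i (Pi.single i 1 + v) := by
    ext a b
    by_cases hb : b = i <;> by_cases ha : a = i <;> simp [X', v, updateRow_apply, ha, hb]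
  have hzero : det (X'.updateCol i v) = 0 :=
    det_eq_zero_of_row_eq_zero i fun b => by
      by_cases hb : b = i <;> simp [X', v, updateRow_apply, hb]
  rw [adjugate_apply]
  change det X' = _
  conv_lhs => rw [hcol]
  rw [det_updateCol_add, hzero, add_zero]

lemma adjugate_apply_self_congr {X Y : Matrix n n R} {i : n}
    (h : ∀ a b, a ≠ i → b ≠ i → X a b = Y a b) : adjugate X i i = adjugate Y i i := by
  rw [adjugate_apply_self_eq_det_updateCol_updateRow,
    adjugate_apply_self_eq_det_updateCol_updateRow]
  congr 1
  ext a b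
  by_cases ha : a = i
  · simp [updateRow_apply, updateCol_apply, ha]
  · by_cases hb : b = i <;> simp [updateRow_apply, ha, hb, h a b]

lemma det_add_smul_single_self (X : Matrix n n R) (i : n) (s : R) :
    det (X + s • single i i 1) = det X + s * adjugate X i i := by
  have : X + s • single i i 1 = X.updateRow i (X i + s • Pi.single i 1) := by
    ext a b
    by_cases ha : a = i
    · simp [updateRow_apply, single_apply, Pi.single_apply, ha, eq_comm]
    · simp [updateRow_apply, ha, Ne.symm ha]
  rw [this, det_updateRow_add, updateRow_eq_self, det_updateRow_smul, adjugate_apply]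

lemma det_one_updateCol (w : n → R) (i : n) : det ((1 : Matrix n n R).updateCol i w) = w i := by
  rw [← cramer_apply, cramer_one]
  rfl

end Cofactor

section GramUpdate

variable {m n : Type*} [Fintype n] [DecidableEq n] {R : Type*} [CommRing R]

lemma updateCol_eq_mul_add_vecMulVec (B : Matrix m n R) (c : m → R) (w : n → R) (i : n) :
    B.updateCol i c =
      B * (1 : Matrix n n R).updateCol i w + vecMulVec (c - B *ᵥ w) (Pi.single i 1) := by
  ext a b
  by_cases hb : b = i
  · subst hb
    simp [mul_apply, vecMulVec_apply, mulVec, dotProduct]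
  · simp [mul_apply, vecMulVec_apply, hb, one_apply]

lemma mul_one_updateCol_apply_of_ne (Y : Matrix m n R) (w : n → R) {i b : n} (hb : b ≠ i)
    (a : m) : (Y * (1 : Matrix n n R).updateCol i w) a b = Y a b := by
  simp [mul_apply, hb, one_apply]

theorem det_transpose_mul_self_updateCol [Fintype m] (B : Matrix m n R) (c : m → R) (w : n → R)
    (i : n) (hw : Bᵀ *ᵥ (c - B *ᵥ w) = 0) :
    det ((B.updateCol i c)ᵀ * B.updateCol i c) =
      w i ^ 2 * det (Bᵀ * B) +
        ((c - B *ᵥ w) ⬝ᵥ (c - B *ᵥ w)) * adjugate (Bᵀ * B) i i := by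
  have hsplit := updateCol_eq_mul_add_vecMulVec B c w i
  set P := (1 : Matrix n n R).updateCol i w
  set e := c - B *ᵥ w
  set E := vecMulVec e (Pi.single i 1)
  have hBE : Bᵀ * E = 0 := by rw [mul_vecMulVec, hw]; simp
  have hEB : Eᵀ * B = 0 := by
    rw [← transpose_transpose B, ← transpose_mul, hBE, transpose_zero]
  have hEE : Eᵀ * E = (e ⬝ᵥ e) • single i i 1 := by
    rw [transpose_vecMulVec, vecMulVec_mul_vecMulVec, single_eq_single_vecMulVec_single]
    ext a b
    simp only [vecMulVec_apply, Matrix.smul_apply, Pi.smul_apply, smul_eq_mul]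
    ring
  have hgram : (B.updateCol i c)ᵀ * B.updateCol i c =
      Pᵀ * (Bᵀ * B) * P + (e ⬝ᵥ e) • single i i 1 := by
    rw [hsplit, transpose_add, transpose_mul, Matrix.add_mul, Matrix.mul_add, Matrix.mul_add,
      Matrix.mul_assoc Pᵀ Bᵀ E, hBE, ← Matrix.mul_assoc Eᵀ B P, hEB, hEE]
    simp [Matrix.mul_assoc]
  have hoff : ∀ a b, a ≠ i → b ≠ i → (Pᵀ * (Bᵀ * B) * P) a b = (Bᵀ * B) a b := by
    intro a b ha hb
    rw [mul_one_updateCol_apply_of_ne _ _ hb, ← transpose_apply (Pᵀ * _), transpose_mul,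
      transpose_transpose, mul_one_updateCol_apply_of_ne _ _ ha, transpose_apply]
  rw [hgram, det_add_smul_single_self, adjugate_apply_self_congr hoff, det_mul, det_mul,
    det_transpose, det_one_updateCol]
  ring

end GramUpdate

section PosDef

variable {n : Type*} [Fintype n]

lemma posDef_transpose_mul_self_of_rank_eq {m : Type*} [Fintype m] {B : Matrix m n ℝ}
    (h : B.rank = Fintype.card n) : (Bᵀ * B).PosDef := by
  simpa [conjTranspose_eq_transpose_of_trivial] using
    PosDef.conjTranspose_mul_self B (mulVec_injective_of_rank_eq h)

variable [DecidableEq n]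

lemma adjugate_apply_self_eq_det_mul_inv {K : Type*} [Field K] {G : Matrix n n K}
    (hdet : G.det ≠ 0) (i : n) : adjugate G i i = det G * G⁻¹ i i := by
  simp [inv_def, Ring.inverse_eq_inv', hdet]

lemma Matrix.PosDef.adjugate_apply_self_pos {G : Matrix n n ℝ} (hG : G.PosDef) (i : n) :
    0 < adjugate G i i := by
  rw [adjugate_apply_self_eq_det_mul_inv hG.det_pos.ne']
  exact mul_pos hG.det_pos hG.inv.diag_pos

-- With `x = G⁻¹ eᵢ`: `xᵀ G x = (G⁻¹)ᵢᵢ` and `(G⁻¹)ᵢᵢ² ≤ ‖x‖²`, so `s (G⁻¹)ᵢᵢ ≤ 1`.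
lemma Matrix.PosDef.mul_adjugate_apply_self_le_det {G : Matrix n n ℝ} (hG : G.PosDef) {s : ℝ}
    (hs : ∀ x, s * (x ⬝ᵥ x) ≤ x ⬝ᵥ (G *ᵥ x)) (i : n) :
    s * adjugate G i i ≤ det G := by
  set x := G⁻¹ *ᵥ Pi.single i 1
  have hGx : G *ᵥ x = Pi.single i 1 := by
    rw [mulVec_mulVec, mul_nonsing_inv _ (isUnit_iff_ne_zero.mpr hG.det_pos.ne'), one_mulVec]
  have hxi : x ⬝ᵥ (G *ᵥ x) = G⁻¹ i i := by
    rw [hGx, dotProduct_single, mul_one]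
    simp [x]
  have hsq : G⁻¹ i i ^ 2 ≤ x ⬝ᵥ x := by
    simpa [dotProduct, sq, x] using
      Finset.single_le_sum (fun a _ => mul_self_nonneg (x a)) (Finset.mem_univ i)
  have hpos : 0 < G⁻¹ i i := hG.inv.diag_pos
  have hsx : s * G⁻¹ i i ≤ 1 := by
    have := hs x
    rw [hxi] at this
    rcases le_or_gt s 0 with h | h
    · nlinarith
    · nlinarith [mul_le_mul_of_nonneg_left hsq h.le]
  rw [adjugate_apply_self_eq_det_mul_inv hG.det_pos.ne']
  nlinarith [hG.det_pos]

end PosDef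

section Projection

variable {m n p : Type*} [Fintype m] [Fintype n] [Fintype p]

lemma transpose_mulVec_sub_mulVec_pinv_eq_zero [DecidableEq n] {B : Matrix m n ℝ}
    (h : (Bᵀ * B).det ≠ 0) (c : m → ℝ) :
    Bᵀ *ᵥ (c - B *ᵥ (((Bᵀ * B)⁻¹ * Bᵀ) *ᵥ c)) = 0 := by
  rw [mulVec_sub, mulVec_mulVec, mulVec_mulVec, ← Matrix.mul_assoc,
    mul_nonsing_inv _ (isUnit_iff_ne_zero.mpr h), Matrix.one_mul, sub_self]

lemma mulVec_transpose_mulVec_eq_of_range_eq [DecidableEq p] {Q : Matrix m p ℝ}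
    {B : Matrix m n ℝ} (hQ : Qᵀ * Q = 1)
    (hrange : LinearMap.range Q.mulVecLin = LinearMap.range B.mulVecLin) {c : m → ℝ} {w : n → ℝ}
    (hw : Bᵀ *ᵥ (c - B *ᵥ w) = 0) :
    Q *ᵥ (Qᵀ *ᵥ c) = B *ᵥ w := by
  have horth : ∀ v, (B *ᵥ v) ⬝ᵥ (Q *ᵥ (Qᵀ *ᵥ c) - B *ᵥ w) = 0 := by
    intro v
    obtain ⟨u, hu⟩ : B *ᵥ v ∈ LinearMap.range Q.mulVecLin := hrange ▸ ⟨v, rfl⟩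
    have hproj : (B *ᵥ v) ⬝ᵥ (Q *ᵥ (Qᵀ *ᵥ c)) = (B *ᵥ v) ⬝ᵥ c := by
      rw [← hu, mulVecLin_apply, ← vecMul_transpose, ← dotProduct_mulVec, mulVec_mulVec, hQ,
        one_mulVec, dotProduct_mulVec]
    have hres : (B *ᵥ v) ⬝ᵥ (c - B *ᵥ w) = 0 := by
      rw [← vecMul_transpose, ← dotProduct_mulVec, hw, dotProduct_zero]
    rwa [dotProduct_sub, hproj, ← dotProduct_sub]
  obtain ⟨u, hu⟩ : Q *ᵥ (Qᵀ *ᵥ c) - B *ᵥ w ∈ LinearMap.range B.mulVecLin :=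
    sub_mem (hrange ▸ ⟨Qᵀ *ᵥ c, rfl⟩) ⟨w, rfl⟩
  have := horth u
  rw [mulVecLin_apply] at hu
  rw [hu] at this
  exact sub_eq_zero.mp (dotProduct_self_eq_zero.mp this)

lemma dotProduct_sub_mulVec_self_le [DecidableEq p] {Q : Matrix m p ℝ} {B : Matrix m n ℝ}
    (hQ : Qᵀ * Q = 1) (hrange : LinearMap.range Q.mulVecLin = LinearMap.range B.mulVecLin)
    {l : Type*} [Fintype l] [DecidableEq l] (A : Matrix m l ℝ) (v : l → ℝ) {w : n → ℝ}
    (hw : Bᵀ *ᵥ (A *ᵥ v - B *ᵥ w) = 0) :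
    (A *ᵥ v - B *ᵥ w) ⬝ᵥ (A *ᵥ v - B *ᵥ w) ≤
      specNorm (A - Q * Qᵀ * A) ^ 2 * (v ⬝ᵥ v) := by
  have hres : (A - Q * Qᵀ * A) *ᵥ v = A *ᵥ v - B *ᵥ w := by
    rw [sub_mulVec, ← mulVec_mulVec, ← mulVec_mulVec,
      mulVec_transpose_mulVec_eq_of_range_eq hQ hrange hw]
  rw [← hres]
  exact dotProduct_mulVec_self_le _ v

end Projection

lemma fromCols_submatrix_update_inl {R m k n : Type*} [DecidableEq k] (B : Matrix m k R)
    (C : Matrix m n R) (i : k) (t : n) :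
    (fromCols B C).submatrix id (Function.update Sum.inl i (Sum.inr t)) =
      B.updateCol i (fun a => C a t) := by
  ext a b
  by_cases hb : b = i
  · subst hb; simp
  · simp [hb]

theorem statement_13_general {m k n' : ℕ} (hm : k + 1 ≤ m)
    (B : Matrix (Fin m) (Fin k) ℝ) (C : Matrix (Fin m) (Fin n') ℝ)
    (hrank : B.rank = k)
    (Q1 : Matrix (Fin m) (Fin k) ℝ)
    (hQ : Q1ᵀ * Q1 = 1)
    (hspan : LinearMap.range Q1.mulVecLin = LinearMap.range B.mulVecLin)
    (μ ν : ℝ) (hμ : 1 ≤ μ)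
    (h1 : sval (Matrix.fromCols B C) k ≤ μ * sval B k)
    (h2 : specNorm (Matrix.fromCols B C - Q1 * Q1ᵀ * Matrix.fromCols B C) ≤
      μ * sval (Matrix.fromCols B C) (k + 1))
    (h3 : ∀ i j, |((Bᵀ * B)⁻¹ * Bᵀ * C) i j| ≤ ν) :
    ∀ (i₀ : Fin k) (t : Fin n'),
      vol ((Matrix.fromCols B C).submatrix id
        (Function.update (Sum.inl : Fin k → Fin k ⊕ Fin n') i₀ (Sum.inr t))) ≤
      Real.sqrt (ν ^ 2 + μ ^ 4) * vol B := by
  intro i₀ t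
  set A := fromCols B C
  set G := Bᵀ * B
  set c : Fin m → ℝ := fun a => C a t
  set w := (G⁻¹ * Bᵀ) *ᵥ c
  set e := c - B *ᵥ w
  have hG : G.PosDef := posDef_transpose_mul_self_of_rank_eq (by simpa using hrank)
  have hw : Bᵀ *ᵥ e = 0 := transpose_mulVec_sub_mulVec_pinv_eq_zero hG.det_pos.ne' c
  have hcoef : w i₀ ^ 2 ≤ ν ^ 2 := by
    obtain ⟨hlo, hhi⟩ := abs_le.mp (h3 i₀ t)
    exact sq_le_sq' hlo hhi
  have hnorm : specNorm (A - Q1 * Q1ᵀ * A) ≤ μ ^ 2 * sval B k :=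
    calc specNorm (A - Q1 * Q1ᵀ * A) ≤ μ * sval A (k + 1) := h2
      _ ≤ μ * sval A k := by gcongr; exact sval_succ_le A i₀.pos
      _ ≤ μ ^ 2 * sval B k := by nlinarith
  have hres : e ⬝ᵥ e ≤ μ ^ 4 * sval B k ^ 2 := by
    have hAc : A *ᵥ Pi.single (Sum.inr t) 1 = c := by ext a; simp [A, c]
    have := dotProduct_sub_mulVec_self_le hQ hspan A (Pi.single (Sum.inr t) 1)
      (by rw [hAc]; exact hw)
    rw [hAc, dotProduct_single, Pi.single_eq_same, mul_one, mul_one] at this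
    nlinarith [specNorm_nonneg (A - Q1 * Q1ᵀ * A), sval_nonneg B k]
  have hcof : sval B k ^ 2 * adjugate G i₀ i₀ ≤ det G :=
    hG.mul_adjugate_apply_self_le_det (fun x => by
      simpa [G, dotProduct_mulVec_self_eq_transpose_mul] using
        sval_card_sq_mul_dotProduct_le B x) i₀
  have hkm : Fintype.card (Fin k) ≤ Fintype.card (Fin m) := by simp; omega
  rw [fromCols_submatrix_update_inl, vol_eq_sqrt_det _ hkm, vol_eq_sqrt_det _ hkm,
    det_transpose_mul_self_updateCol B c w i₀ hw, ← Real.sqrt_mul (by positivity)]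
  refine Real.sqrt_le_sqrt ?_
  have := hG.det_pos
  have := hG.adjugate_apply_self_pos i₀
  calc w i₀ ^ 2 * det G + (e ⬝ᵥ e) * adjugate G i₀ i₀
      ≤ ν ^ 2 * det G + μ ^ 4 * (sval B k ^ 2 * adjugate G i₀ i₀) := by
        rw [← mul_assoc]
        gcongr
    _ ≤ (ν ^ 2 + μ ^ 4) * det G := by rw [add_mul]; gcongr

theorem statement_13 {m k n' : ℕ} (hm : k + 1 ≤ m) (hn : 1 ≤ n')
    (B : Matrix (Fin m) (Fin k) ℝ) (C : Matrix (Fin m) (Fin n') ℝ)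
    (hrank : B.rank = k)
    (Q1 : Matrix (Fin m) (Fin k) ℝ)
    (hQ : Q1ᵀ * Q1 = 1)
    (hspan : LinearMap.range Q1.mulVecLin = LinearMap.range B.mulVecLin)
    (μ ν : ℝ) (hμ : 1 ≤ μ) (hν : 1 ≤ ν)
    (h1 : sval (Matrix.fromCols B C) k ≤ μ * sval B k)
    (h2 : specNorm (Matrix.fromCols B C - Q1 * Q1ᵀ * Matrix.fromCols B C) ≤
      μ * sval (Matrix.fromCols B C) (k + 1))
    (h3 : ∀ i j, |((Bᵀ * B)⁻¹ * Bᵀ * C) i j| ≤ ν) :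
    ∀ (i₀ : Fin k) (t : Fin n'),
      vol ((Matrix.fromCols B C).submatrix id
        (Function.update (Sum.inl : Fin k → Fin k ⊕ Fin n') i₀ (Sum.inr t))) ≤
      Real.sqrt (ν ^ 2 + μ ^ 4) * vol B :=
  statement_13_general hm B C hrank Q1 hQ hspan μ ν hμ h1 h2 h3
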